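/- arXiv:2010.15835 — 3 statements merged into one kernel-verified Lean document; each statement's English description precedes it below -/
import Mathlib

section
/- Let X, A, S, Y be random variables on a finite probability space, with A binary. Assume (i) ignorability: conditional on X, A is independent of the pair (S, Y); (ii) positivity: 0 < P(A=1 | X=x) < 1 for all x with P(X=x) > 0; (iii) surrogacy: A is independent of Y conditional on (S, X). Define the surrogate index Ỹ = E[Y | S, X] and the propensity e(x) = P(A=1 | X=x). Then for any function π : X-values → [0,1], E[π(X)·A·Y/e(X) + (1−π(X))·(1−A)·Y/(1−e(X))] = E[π(X)·A·Ỹ/e(X) + (1−π(X))·(1−A)·Ỹ/(1−e(X))]. -/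
open Finset
open scoped BigOperators Classical

/-- Probability of an event on a finite space with weights `P`. -/
noncomputable def prb {Ω : Type*} [Fintype Ω] (P : Ω → ℝ) (E : Ω → Prop) : ℝ :=
  ∑ ω, if E ω then P ω else 0

/-- Expectation of `f` on a finite space with weights `P`. -/
noncomputable def pexp {Ω : Type*} [Fintype Ω] (P : Ω → ℝ) (f : Ω → ℝ) : ℝ :=
  ∑ ω, P ω * f ω

/-- Conditional expectation of `f` given the event `E`. -/
noncomputable def cexp {Ω : Type*} [Fintype Ω] (P : Ω → ℝ) (f : Ω → ℝ) (E : Ω → Prop) : ℝ :=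
  (∑ ω, if E ω then P ω * f ω else 0) / prb P E

noncomputable def wsum {Ω : Type*} [Fintype Ω] (P : Ω → ℝ) (f : Ω → ℝ) (E : Ω → Prop) : ℝ :=
  ∑ ω, if E ω then P ω * f ω else 0

lemma prb_congr {Ω : Type*} [Fintype Ω] (P : Ω → ℝ) {E E' : Ω → Prop}
    (h : ∀ ω, E ω ↔ E' ω) : prb P E = prb P E' := by
  have hE : E = E' := funext fun ω => propext (h ω)
  rw [hE]

lemma cexp_eq_wsum_div {Ω : Type*} [Fintype Ω] (P Y : Ω → ℝ) (E : Ω → Prop) :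
    cexp P Y E = wsum P Y E / prb P E := rfl

lemma wsum_fiber {Ω : Type*} [Fintype Ω] (P Y : Ω → ℝ) (E : Ω → Prop) :
    wsum P Y E = ∑ y ∈ Finset.univ.image Y, y * prb P (fun ω => E ω ∧ Y ω = y) := by
  unfold wsum prb
  have expand : ∀ ω, (if E ω then P ω * Y ω else 0)
      = ∑ y ∈ Finset.univ.image Y, if E ω ∧ Y ω = y then y * P ω else 0 := by
    intro ω
    rw [Finset.sum_eq_single (Y ω)]
    · by_cases h : E ω <;> simp [h, mul_comm]
    · intro y _ hy
      have hne : ¬ (E ω ∧ Y ω = y) := fun hc => hy (hc.2.symm)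
      simp [hne]
    · intro h
      exact absurd (Finset.mem_image_of_mem Y (Finset.mem_univ ω)) h
  calc (∑ ω, if E ω then P ω * Y ω else 0)
      = ∑ ω, ∑ y ∈ Finset.univ.image Y, if E ω ∧ Y ω = y then y * P ω else 0 :=
        Finset.sum_congr rfl fun ω _ => expand ω
    _ = ∑ y ∈ Finset.univ.image Y, ∑ ω, if E ω ∧ Y ω = y then y * P ω else 0 :=
        Finset.sum_comm
    _ = _ := by
        refine Finset.sum_congr rfl fun y _ => ?_
        rw [Finset.mul_sum]
        refine Finset.sum_congr rfl fun ω _ => ?_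
        by_cases h : E ω ∧ Y ω = y
        · rw [if_pos h, if_pos h]
        · rw [if_neg h, if_neg h]
          ring

lemma prb_zero {Ω : Type*} [Fintype Ω] {P : Ω → ℝ} (hP : ∀ ω, 0 ≤ P ω)
    {E : Ω → Prop} (h : prb P E = 0) : ∀ ω, E ω → P ω = 0 := by
  intro ω hω
  by_contra hne
  have hlt : 0 < P ω := lt_of_le_of_ne (hP ω) (Ne.symm hne)
  have hpos : 0 < prb P E := by
    unfold prb
    refine Finset.sum_pos' (fun ω' _ => ?_) ⟨ω, Finset.mem_univ ω, ?_⟩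
    · split_ifs
      · exact hP ω'
      · exact le_rfl
    · rw [if_pos hω]
      exact hlt
  linarith

lemma key_lemma {Ω 𝒳 𝒮 : Type*} [Fintype Ω]
    (P : Ω → ℝ) (X : Ω → 𝒳) (A : Ω → ℝ) (S : Ω → 𝒮) (Y : Ω → ℝ)
    (hsur : ∀ (a y : ℝ) (s : 𝒮) (x : 𝒳),
      prb P (fun ω => A ω = a ∧ Y ω = y ∧ S ω = s ∧ X ω = x)
          * prb P (fun ω => S ω = s ∧ X ω = x)
        = prb P (fun ω => A ω = a ∧ S ω = s ∧ X ω = x)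
          * prb P (fun ω => Y ω = y ∧ S ω = s ∧ X ω = x))
    (a : ℝ) (s : 𝒮) (x : 𝒳) :
    wsum P Y (fun ω => A ω = a ∧ S ω = s ∧ X ω = x) * prb P (fun ω => S ω = s ∧ X ω = x)
      = prb P (fun ω => A ω = a ∧ S ω = s ∧ X ω = x)
        * wsum P Y (fun ω => S ω = s ∧ X ω = x) := by
  rw [wsum_fiber, wsum_fiber, Finset.sum_mul, Finset.mul_sum]
  refine Finset.sum_congr rfl fun y _ => ?_
  have h1 : prb P (fun ω => (A ω = a ∧ S ω = s ∧ X ω = x) ∧ Y ω = y)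
      = prb P (fun ω => A ω = a ∧ Y ω = y ∧ S ω = s ∧ X ω = x) :=
    prb_congr _ (fun ω => by tauto)
  have h2 : prb P (fun ω => (S ω = s ∧ X ω = x) ∧ Y ω = y)
      = prb P (fun ω => Y ω = y ∧ S ω = s ∧ X ω = x) :=
    prb_congr _ (fun ω => by tauto)
  rw [h1, h2, mul_assoc, hsur a y s x]
  ring

lemma star_lemma {Ω 𝒳 𝒮 : Type*} [Fintype Ω]
    (P : Ω → ℝ) (hP : ∀ ω, 0 ≤ P ω)
    (X : Ω → 𝒳) (A : Ω → ℝ) (S : Ω → 𝒮) (Y : Ω → ℝ)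
    (hsur : ∀ (a y : ℝ) (s : 𝒮) (x : 𝒳),
      prb P (fun ω => A ω = a ∧ Y ω = y ∧ S ω = s ∧ X ω = x)
          * prb P (fun ω => S ω = s ∧ X ω = x)
        = prb P (fun ω => A ω = a ∧ S ω = s ∧ X ω = x)
          * prb P (fun ω => Y ω = y ∧ S ω = s ∧ X ω = x))
    (a : ℝ) (s : 𝒮) (x : 𝒳) :
    wsum P Y (fun ω => A ω = a ∧ S ω = s ∧ X ω = x)
      = prb P (fun ω => A ω = a ∧ S ω = s ∧ X ω = x)
        * cexp P Y (fun ω => S ω = s ∧ X ω = x) := by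
  by_cases hF : prb P (fun ω => S ω = s ∧ X ω = x) = 0
  · -- all weights in the event are zero
    have hzero : ∀ ω, (S ω = s ∧ X ω = x) → P ω = 0 := prb_zero hP hF
    have h1 : wsum P Y (fun ω => A ω = a ∧ S ω = s ∧ X ω = x) = 0 := by
      unfold wsum
      refine Finset.sum_eq_zero fun ω _ => ?_
      split_ifs with h
      · rw [hzero ω ⟨h.2.1, h.2.2⟩]; ring
      · rfl
    have h2 : prb P (fun ω => A ω = a ∧ S ω = s ∧ X ω = x) = 0 := by
      unfold prb
      refine Finset.sum_eq_zero fun ω _ => ?_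
      split_ifs with h
      · exact hzero ω ⟨h.2.1, h.2.2⟩
      · rfl
    rw [h1, h2, zero_mul]
  · rw [cexp_eq_wsum_div, ← mul_div_assoc, eq_div_iff hF]
    exact key_lemma P X A S Y hsur a s x

lemma aux_lemma {Ω 𝒳 𝒮 : Type*} [Fintype Ω]
    (P : Ω → ℝ) (hP : ∀ ω, 0 ≤ P ω)
    (X : Ω → 𝒳) (A : Ω → ℝ) (S : Ω → 𝒮) (Y : Ω → ℝ)
    (hsur : ∀ (a y : ℝ) (s : 𝒮) (x : 𝒳),
      prb P (fun ω => A ω = a ∧ Y ω = y ∧ S ω = s ∧ X ω = x)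
          * prb P (fun ω => S ω = s ∧ X ω = x)
        = prb P (fun ω => A ω = a ∧ S ω = s ∧ X ω = x)
          * prb P (fun ω => Y ω = y ∧ S ω = s ∧ X ω = x))
    (Ytil : Ω → ℝ)
    (hYtil : ∀ ω, Ytil ω = cexp P Y (fun ω' => S ω' = S ω ∧ X ω' = X ω))
    (G : ℝ → 𝒳 → ℝ) :
    ∑ ω, P ω * (G (A ω) (X ω) * Y ω) = ∑ ω, P ω * (G (A ω) (X ω) * Ytil ω) := by
  classical
  have hmap : ∀ ω ∈ (Finset.univ : Finset Ω),
      (A ω, S ω, X ω) ∈ Finset.univ.image (fun ω => (A ω, S ω, X ω)) :=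
    fun ω _ => Finset.mem_image_of_mem _ (Finset.mem_univ ω)
  rw [← Finset.sum_fiberwise_of_maps_to hmap (fun ω => P ω * (G (A ω) (X ω) * Y ω)),
      ← Finset.sum_fiberwise_of_maps_to hmap (fun ω => P ω * (G (A ω) (X ω) * Ytil ω))]
  refine Finset.sum_congr rfl fun t _ => ?_
  obtain ⟨a, s, x⟩ := t
  have hmem : ∀ ω ∈ Finset.univ.filter (fun ω => (A ω, S ω, X ω) = (a, s, x)),
      A ω = a ∧ S ω = s ∧ X ω = x := by
    intro ω hω
    have := (Finset.mem_filter.mp hω).2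
    simpa [Prod.ext_iff] using this
  have hiff : ∀ ω, ((A ω, S ω, X ω) = (a, s, x)) ↔ (A ω = a ∧ S ω = s ∧ X ω = x) := by
    intro ω; simp [Prod.ext_iff]
  have hprb : ∑ ω ∈ Finset.univ.filter (fun ω => (A ω, S ω, X ω) = (a, s, x)), P ω
      = prb P (fun ω => A ω = a ∧ S ω = s ∧ X ω = x) := by
    rw [Finset.sum_filter]
    unfold prb
    refine Finset.sum_congr rfl fun ω _ => ?_
    by_cases h : A ω = a ∧ S ω = s ∧ X ω = x
    · rw [if_pos ((hiff ω).mpr h), if_pos h]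
    · rw [if_neg (fun hc => h ((hiff ω).mp hc)), if_neg h]
  have hwsum : ∑ ω ∈ Finset.univ.filter (fun ω => (A ω, S ω, X ω) = (a, s, x)), P ω * Y ω
      = wsum P Y (fun ω => A ω = a ∧ S ω = s ∧ X ω = x) := by
    rw [Finset.sum_filter]
    unfold wsum
    refine Finset.sum_congr rfl fun ω _ => ?_
    by_cases h : A ω = a ∧ S ω = s ∧ X ω = x
    · rw [if_pos ((hiff ω).mpr h), if_pos h]
    · rw [if_neg (fun hc => h ((hiff ω).mp hc)), if_neg h]
  calc ∑ ω ∈ Finset.univ.filter (fun ω => (A ω, S ω, X ω) = (a, s, x)),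
        P ω * (G (A ω) (X ω) * Y ω)
      = G a x * (∑ ω ∈ Finset.univ.filter (fun ω => (A ω, S ω, X ω) = (a, s, x)), P ω * Y ω) := by
        rw [Finset.mul_sum]
        refine Finset.sum_congr rfl fun ω hω => ?_
        obtain ⟨h1, h2, h3⟩ := hmem ω hω
        rw [h1, h3]; ring
    _ = G a x * (prb P (fun ω => A ω = a ∧ S ω = s ∧ X ω = x)
          * cexp P Y (fun ω => S ω = s ∧ X ω = x)) := by
        rw [hwsum, star_lemma P hP X A S Y hsur a s x]
    _ = ∑ ω ∈ Finset.univ.filter (fun ω => (A ω, S ω, X ω) = (a, s, x)),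
          P ω * (G (A ω) (X ω) * Ytil ω) := by
        have hconst : ∑ ω ∈ Finset.univ.filter (fun ω => (A ω, S ω, X ω) = (a, s, x)),
              P ω * (G (A ω) (X ω) * Ytil ω)
            = ∑ ω ∈ Finset.univ.filter (fun ω => (A ω, S ω, X ω) = (a, s, x)),
              P ω * (G a x * cexp P Y (fun ω' => S ω' = s ∧ X ω' = x)) := by
          refine Finset.sum_congr rfl fun ω hω => ?_
          obtain ⟨h1, h2, h3⟩ := hmem ω hω
          rw [hYtil ω, h1, h2, h3]
        rw [hconst, ← Finset.sum_mul, hprb]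
        ring

/-- under ignorability, positivity and surrogacy, the IPW policy-value
functional computed on the surrogate index `Ỹ = E[Y | S, X]` coincides with the one
computed on the true long-term outcome `Y`. -/
theorem stmt_0 {Ω 𝒳 𝒮 : Type*} [Fintype Ω]
    (P : Ω → ℝ) (hP : ∀ ω, 0 ≤ P ω) (hPsum : ∑ ω, P ω = 1)
    (X : Ω → 𝒳) (A : Ω → ℝ) (hA : ∀ ω, A ω = 0 ∨ A ω = 1)
    (S : Ω → 𝒮) (Y : Ω → ℝ)
    -- (i) ignorability: conditional on X, A ⫫ (S, Y)
    (hig : ∀ (a y : ℝ) (s : 𝒮) (x : 𝒳),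
      prb P (fun ω => A ω = a ∧ S ω = s ∧ Y ω = y ∧ X ω = x) * prb P (fun ω => X ω = x)
        = prb P (fun ω => A ω = a ∧ X ω = x)
          * prb P (fun ω => S ω = s ∧ Y ω = y ∧ X ω = x))
    -- propensity score e(x) = P(A = 1 | X = x)
    (e : 𝒳 → ℝ)
    (he : ∀ x, e x = prb P (fun ω => A ω = 1 ∧ X ω = x) / prb P (fun ω => X ω = x))
    -- (ii) positivity
    (hpos : ∀ x, 0 < prb P (fun ω => X ω = x) → 0 < e x ∧ e x < 1)
    -- (iii) surrogacy: A ⫫ Y | (S, X)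
    (hsur : ∀ (a y : ℝ) (s : 𝒮) (x : 𝒳),
      prb P (fun ω => A ω = a ∧ Y ω = y ∧ S ω = s ∧ X ω = x)
          * prb P (fun ω => S ω = s ∧ X ω = x)
        = prb P (fun ω => A ω = a ∧ S ω = s ∧ X ω = x)
          * prb P (fun ω => Y ω = y ∧ S ω = s ∧ X ω = x))
    -- surrogate index Ỹ = E[Y | S, X]
    (Ytil : Ω → ℝ)
    (hYtil : ∀ ω, Ytil ω = cexp P Y (fun ω' => S ω' = S ω ∧ X ω' = X ω))
    -- a policy π : 𝒳 → [0,1]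
    (π : 𝒳 → ℝ) (hπ : ∀ x, 0 ≤ π x ∧ π x ≤ 1) :
    pexp P (fun ω => π (X ω) * A ω * Y ω / e (X ω)
        + (1 - π (X ω)) * (1 - A ω) * Y ω / (1 - e (X ω)))
      = pexp P (fun ω => π (X ω) * A ω * Ytil ω / e (X ω)
        + (1 - π (X ω)) * (1 - A ω) * Ytil ω / (1 - e (X ω))) := by
  have key := aux_lemma P hP X A S Y hsur Ytil hYtil
    (fun a x => π x * a / e x + (1 - π x) * (1 - a) / (1 - e x))
  unfold pexp
  calc ∑ ω, P ω * (π (X ω) * A ω * Y ω / e (X ω)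
        + (1 - π (X ω)) * (1 - A ω) * Y ω / (1 - e (X ω)))
      = ∑ ω, P ω * ((π (X ω) * A ω / e (X ω)
          + (1 - π (X ω)) * (1 - A ω) / (1 - e (X ω))) * Y ω) := by
        refine Finset.sum_congr rfl fun ω _ => ?_; ring
    _ = ∑ ω, P ω * ((π (X ω) * A ω / e (X ω)
          + (1 - π (X ω)) * (1 - A ω) / (1 - e (X ω))) * Ytil ω) := key
    _ = ∑ ω, P ω * (π (X ω) * A ω * Ytil ω / e (X ω)
          + (1 - π (X ω)) * (1 - A ω) * Ytil ω / (1 - e (X ω))) := by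
        refine Finset.sum_congr rfl fun ω _ => ?_; ring
end

section
/- Let τ, τ̃ : 𝒳 → ℝ on a finite set 𝒳 with distribution F, and suppose |τ(x) − τ̃(x)| ≤ b̄(x) for all x, where b̄ : 𝒳 → ℝ≥0. Define π̃*(x) = 1{τ̃(x) ≥ 0} and π*(x) = 1{τ(x) ≥ 0}. Then the regret E_F[(π*(X) − π̃*(X))·τ(X)] is bounded above by ∑_{x : b̄(x) > |τ̃(x)|} (b̄(x) − |τ̃(x)|)·F(x). -/
open Finset
open scoped BigOperators

/-- regret bound for the surrogate-based policy from a pointwise bias bound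
`|τ(x) − τ̃(x)| ≤ b̄(x)`. -/
theorem stmt_5 {𝒳 : Type*} [Fintype 𝒳]
    (F : 𝒳 → ℝ) (hF : ∀ x, 0 ≤ F x) (hFsum : ∑ x, F x = 1)
    (τ τtil bbar : 𝒳 → ℝ) (hb0 : ∀ x, 0 ≤ bbar x)
    (hb : ∀ x, |τ x - τtil x| ≤ bbar x) :
    ∑ x, F x * (((if 0 ≤ τ x then (1:ℝ) else 0) - (if 0 ≤ τtil x then (1:ℝ) else 0)) * τ x)
      ≤ ∑ x, (if |τtil x| < bbar x then (bbar x - |τtil x|) * F x else 0) := by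
  apply Finset.sum_le_sum
  intro x _
  have hbx := abs_le.mp (hb x)
  have hFx := hF x
  have hb0x := hb0 x
  rcases le_or_gt 0 (τ x) with h1 | h1 <;> rcases le_or_gt 0 (τtil x) with h2 | h2 <;>
    (first | rw [if_pos h1] | rw [if_neg (not_le.mpr h1)]) <;>
    (first | rw [if_pos h2] | rw [if_neg (not_le.mpr h2)]) <;>
    rcases abs_cases (τtil x) with ⟨he, he2⟩ | ⟨he, he2⟩ <;> rw [he] <;>
    split_ifs with h3 <;>
    first
    | nlinarith [mul_le_mul_of_nonneg_left hbx.1 hFx,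
        mul_le_mul_of_nonneg_left hbx.2 hFx, mul_nonneg hFx hb0x,
        mul_le_mul_of_nonneg_left h3.le hFx]
    | nlinarith [mul_le_mul_of_nonneg_left hbx.1 hFx,
        mul_le_mul_of_nonneg_left hbx.2 hFx, mul_nonneg hFx hb0x,
        mul_le_mul_of_nonneg_left (le_of_not_gt h3) hFx]
end

section
/- Let A take values in a finite action set 𝔸, with P(A=a | X=x) > 0 for all a, x, and ignorability A ⫫ (Y(a))_{a ∈ 𝔸} | X on a finite probability space. For μ : 𝒳 × 𝔸 → ℝ define γ_a as the doubly-robust score μ(X,a) + 1{A=a}(Y − μ(X,a))/P(A=a|X), where Y = Y(A). Then for any stochastic policy π : 𝒳 → Δ(𝔸), E[∑_{a ∈ 𝔸} π(a | X)·γ_a] = E[∑_{a ∈ 𝔸} π(a | X)·Y(a)] = V(π). -/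
open Finset
open scoped BigOperators Classical

/-- Auxiliary: indicator-weighted sum (to keep `if` instances opaque). -/
noncomputable def isum {Ω : Type*} [Fintype Ω] (P : Ω → ℝ) (E : Ω → Prop) (h : Ω → ℝ) : ℝ :=
  ∑ ω, if E ω then P ω * h ω else 0

/-- for any stochastic policy, the expected policy-weighted doubly-robust
score equals the policy value `V(π)`, for any outcome model `μ`. -/
theorem stmt_9 {Ω 𝒳 𝔸 : Type*} [Fintype Ω] [Fintype 𝔸]
    (P : Ω → ℝ) (hP : ∀ ω, 0 ≤ P ω) (hPsum : ∑ ω, P ω = 1)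
    (X : Ω → 𝒳) (A : Ω → 𝔸) (Ypot : 𝔸 → Ω → ℝ)
    (Y : Ω → ℝ) (hY : ∀ ω, Y ω = Ypot (A ω) ω)
    -- ignorability: A ⫫ (Y(a))_{a ∈ 𝔸} | X
    (hig : ∀ (a : 𝔸) (f : 𝔸 → ℝ) (x : 𝒳),
      prb P (fun ω => A ω = a ∧ (∀ b, Ypot b ω = f b) ∧ X ω = x)
          * prb P (fun ω => X ω = x)
        = prb P (fun ω => A ω = a ∧ X ω = x)
          * prb P (fun ω => (∀ b, Ypot b ω = f b) ∧ X ω = x))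
    -- known propensities with positivity
    (pD : 𝒳 → 𝔸 → ℝ)
    (hpD : ∀ x a, pD x a
      = prb P (fun ω => A ω = a ∧ X ω = x) / prb P (fun ω => X ω = x))
    (hpos : ∀ x a, 0 < prb P (fun ω => X ω = x) → 0 < pD x a)
    -- arbitrary outcome model
    (μ : 𝒳 → 𝔸 → ℝ)
    -- stochastic policy π : 𝒳 → Δ(𝔸)
    (π : 𝒳 → 𝔸 → ℝ) (hπ0 : ∀ x a, 0 ≤ π x a) (hπ1 : ∀ x, ∑ a, π x a = 1) :
    pexp P (fun ω => ∑ a, π (X ω) a *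
        (μ (X ω) a + (if A ω = a then (1:ℝ) else 0) * (Y ω - μ (X ω) a) / pD (X ω) a))
      = pexp P (fun ω => ∑ a, π (X ω) a * Ypot a ω) := by
  classical
  have prb_congr : ∀ (E E' : Ω → Prop), (∀ ω, E ω ↔ E' ω) → prb P E = prb P E' := by
    intro E E' h
    unfold prb
    exact Finset.sum_congr rfl fun ω _ => if_congr (h ω) rfl rfl
  set S := Finset.image (fun ω b => Ypot b ω) (Finset.univ : Finset Ω) with hS
  have swap : ∀ (C : Ω → Prop) (g : (𝔸 → ℝ) → ℝ),
      (∑ f ∈ S, g f * prb P (fun ω => C ω ∧ ∀ b, Ypot b ω = f b))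
        = isum P C (fun ω => g (fun b => Ypot b ω)) := by
    intro C g
    unfold prb isum
    simp_rw [← funext_iff, Finset.mul_sum, mul_ite, mul_zero, ite_and]
    rw [Finset.sum_comm]
    refine Finset.sum_congr rfl fun ω _ => ?_
    by_cases hC : C ω
    · simp only [if_pos hC]
      rw [Finset.sum_ite_eq]
      have hmem : (fun b => Ypot b ω) ∈ S := Finset.mem_image_of_mem _ (Finset.mem_univ ω)
      simp [hmem, mul_comm]
    · simp [hC]
  have key : ∀ (a : 𝔸) (x : 𝒳),
      isum P (fun ω => A ω = a ∧ X ω = x) (fun ω => Ypot a ω - μ x a)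
        * prb P (fun ω => X ω = x)
      = prb P (fun ω => A ω = a ∧ X ω = x)
        * isum P (fun ω => X ω = x) (fun ω => Ypot a ω - μ x a) := by
    intro a x
    have h1 := swap (fun ω => A ω = a ∧ X ω = x) (fun f => f a - μ x a)
    have h2 := swap (fun ω => X ω = x) (fun f => f a - μ x a)
    beta_reduce at h1 h2
    rw [← h1, ← h2, Finset.sum_mul, Finset.mul_sum]
    refine Finset.sum_congr rfl fun f _ => ?_
    have e1 : prb P (fun ω => (A ω = a ∧ X ω = x) ∧ ∀ b, Ypot b ω = f b)
        = prb P (fun ω => A ω = a ∧ (∀ b, Ypot b ω = f b) ∧ X ω = x) :=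
      prb_congr _ _ (by tauto)
    have e2 : prb P (fun ω => X ω = x ∧ ∀ b, Ypot b ω = f b)
        = prb P (fun ω => (∀ b, Ypot b ω = f b) ∧ X ω = x) :=
      prb_congr _ _ (by tauto)
    rw [e1, e2]
    linear_combination (f a - μ x a) * hig a f x
  unfold pexp
  simp_rw [Finset.mul_sum]
  rw [Finset.sum_comm]
  rw [show (∑ ω, ∑ a, P ω * (π (X ω) a * Ypot a ω))
      = ∑ a, ∑ ω, P ω * (π (X ω) a * Ypot a ω) from Finset.sum_comm]
  refine Finset.sum_congr rfl fun a _ => ?_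
  rw [← Finset.sum_fiberwise_of_maps_to (t := Finset.univ.image X)
      (fun ω _ => Finset.mem_image_of_mem X (Finset.mem_univ ω))
      (fun ω => P ω * (π (X ω) a *
        (μ (X ω) a + (if A ω = a then (1:ℝ) else 0) * (Y ω - μ (X ω) a) / pD (X ω) a)))]
  rw [← Finset.sum_fiberwise_of_maps_to (t := Finset.univ.image X)
      (fun ω _ => Finset.mem_image_of_mem X (Finset.mem_univ ω))
      (fun ω => P ω * (π (X ω) a * Ypot a ω))]
  refine Finset.sum_congr rfl fun x _ => ?_
  have hfib : ∀ ω ∈ Finset.univ.filter (fun ω => X ω = x), X ω = x :=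
    fun ω hω => (Finset.mem_filter.mp hω).2
  have hnn : (0:ℝ) ≤ prb P (fun ω => X ω = x) :=
    Finset.sum_nonneg (fun ω _ => by by_cases h : X ω = x <;> simp [h, hP ω])
  by_cases hpx : prb P (fun ω => X ω = x) = 0
  · have hz : ∀ ω ∈ Finset.univ.filter (fun ω => X ω = x), P ω = 0 := by
      intro ω hω
      have := (Finset.sum_eq_zero_iff_of_nonneg (fun ω _ => by
        by_cases h : X ω = x <;> simp [h, hP ω])).mp hpx ω (Finset.mem_univ ω)
      simpa [(Finset.mem_filter.mp hω).2] using this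
    have z1 : ∑ ω ∈ Finset.univ.filter (fun ω => X ω = x),
        P ω * (π (X ω) a *
          (μ (X ω) a + (if A ω = a then (1:ℝ) else 0) * (Y ω - μ (X ω) a) / pD (X ω) a)) = 0 :=
      Finset.sum_eq_zero fun ω hω => by rw [hz ω hω]; ring
    have z2 : ∑ ω ∈ Finset.univ.filter (fun ω => X ω = x),
        P ω * (π (X ω) a * Ypot a ω) = 0 :=
      Finset.sum_eq_zero fun ω hω => by rw [hz ω hω]; ring
    rw [z1, z2]
  · have hpx' : 0 < prb P (fun ω => X ω = x) := lt_of_le_of_ne hnn (Ne.symm hpx)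
    have hpd : 0 < pD x a := hpos x a hpx'
    have hpdne : pD x a ≠ 0 := ne_of_gt hpd
    have hT1 : (∑ ω ∈ Finset.univ.filter (fun ω => X ω = x),
        if A ω = a then P ω * (Ypot a ω - μ x a) else 0)
      = isum P (fun ω => A ω = a ∧ X ω = x) (fun ω => Ypot a ω - μ x a) := by
      unfold isum
      rw [Finset.sum_filter]
      refine Finset.sum_congr rfl fun ω _ => ?_
      by_cases h1 : X ω = x <;> by_cases h2 : A ω = a <;> simp [h1, h2]
    have hT2 : (∑ ω ∈ Finset.univ.filter (fun ω => X ω = x), P ω * (Ypot a ω - μ x a))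
      = isum P (fun ω => X ω = x) (fun ω => Ypot a ω - μ x a) := by
      unfold isum
      rw [Finset.sum_filter]
    have hT : isum P (fun ω => A ω = a ∧ X ω = x) (fun ω => Ypot a ω - μ x a)
        = pD x a * isum P (fun ω => X ω = x) (fun ω => Ypot a ω - μ x a) := by
      rw [hpD x a, div_mul_eq_mul_div, eq_div_iff hpx]
      exact key a x
    have hL : ∑ ω ∈ Finset.univ.filter (fun ω => X ω = x),
        P ω * (π (X ω) a *
          (μ (X ω) a + (if A ω = a then (1:ℝ) else 0) * (Y ω - μ (X ω) a) / pD (X ω) a))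
      = π x a * μ x a * (∑ ω ∈ Finset.univ.filter (fun ω => X ω = x), P ω)
        + (π x a / pD x a) * (∑ ω ∈ Finset.univ.filter (fun ω => X ω = x),
            if A ω = a then P ω * (Ypot a ω - μ x a) else 0) := by
      rw [Finset.mul_sum, Finset.mul_sum, ← Finset.sum_add_distrib]
      refine Finset.sum_congr rfl fun ω hω => ?_
      rw [hfib ω hω, hY ω]
      by_cases hA : A ω = a
      · rw [if_pos hA, if_pos hA, hA]
        field_simp
      · rw [if_neg hA, if_neg hA]
        ring
    have hR : ∑ ω ∈ Finset.univ.filter (fun ω => X ω = x), P ω * (π (X ω) a * Ypot a ω)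
      = π x a * μ x a * (∑ ω ∈ Finset.univ.filter (fun ω => X ω = x), P ω)
        + π x a * (∑ ω ∈ Finset.univ.filter (fun ω => X ω = x),
            P ω * (Ypot a ω - μ x a)) := by
      rw [Finset.mul_sum, Finset.mul_sum, ← Finset.sum_add_distrib]
      refine Finset.sum_congr rfl fun ω hω => ?_
      rw [hfib ω hω]; ring
    rw [hL, hR, hT1, hT2, hT]
    field_simp
end
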